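/- Let d ≥ 1. For every commutative ring R and all elements f_0,…,f_d, g_0,…,g_d ∈ R, let A = (a_{ij})_{1≤i,j≤d} be the Bézout matrix of the coefficient vectors f and g as defined in the context, and let S be the 2d×2d Sylvester matrix defined by: for 1 ≤ i ≤ d, row i of S has entry f_l in column i+l for 0 ≤ l ≤ d and zeros elsewhere; for 1 ≤ i ≤ d, row d+i has entry g_l in column i+l for 0 ≤ l ≤ d and zeros elsewhere. Then det A = (−1)^{d(d−1)/2} · det S. -/

import Mathlib

/-- The Bézout matrix of two binary forms of degree `d` with coefficient vectors
`f = (f_0,…,f_d)` and `g = (g_0,…,g_d)`: the `d×d` matrix whose `(i,j)` entry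
(1-indexed, here realized with 0-based `Fin d` indices) is
`Σ [p,q]` over all `0 ≤ p < q ≤ d` with `p < min(i,j)` and `p + q = i + j − 1`,
where `[p,q] = f_p g_q − f_q g_p`. -/
def bezoutMatrix {R : Type*} [CommRing R] (d : ℕ) (f g : ℕ → R) :
    Matrix (Fin d) (Fin d) R :=
  Matrix.of fun i j =>
    ∑ p ∈ Finset.range (d + 1), ∑ q ∈ Finset.range (d + 1),
      if p < q ∧ p ≤ min i.val j.val ∧ p + q = i.val + j.val + 1 then
        f p * g q - f q * g p
      else 0

/-- The `2d×2d` Sylvester matrix of two binary forms of degree `d`: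
for `1 ≤ i ≤ d` (here 0-based), row `i` has entry `f_l` in column `i+l` for
`0 ≤ l ≤ d` and zeros elsewhere, and row `d+i` has entry `g_l` in column `i+l`. -/
def sylvesterMatrix2d {R : Type*} [CommRing R] (d : ℕ) (f g : ℕ → R) :
    Matrix (Fin (2 * d)) (Fin (2 * d)) R :=
  Matrix.of fun i j =>
    if i.val < d then
      (if i.val ≤ j.val ∧ j.val ≤ i.val + d then f (j.val - i.val) else 0)
    else
      (if i.val - d ≤ j.val ∧ j.val ≤ (i.val - d) + d then g (j.val - (i.val - d)) else 0)

namespace BezAux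
open Matrix Finset

variable {R : Type*} [CommRing R]

open Equiv in
lemma rev_decomp (n : ℕ) :
    (Fin.revPerm : Equiv.Perm (Fin (n + 2))) =
      Equiv.Perm.decomposeFin.symm (Fin.last (n + 1),
        (Fin.revPerm : Equiv.Perm (Fin (n + 1))) * finRotate (n + 1)) := by
  ext x
  refine Fin.cases ?_ (fun j => ?_) x
  · simp
  · rw [Equiv.Perm.decomposeFin_symm_apply_succ]
    simp only [Equiv.Perm.mul_apply, Fin.revPerm_apply, finRotate_succ_apply]
    rcases eq_or_ne j (Fin.last n) with h | h
    · subst h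
      simp [Fin.ext_iff, Fin.rev, Fin.last, Equiv.swap_apply_def, Fin.val_add]
    · have hj : (j : ℕ) < n := by
        have := j.isLt
        have : (j : ℕ) ≠ n := fun hh => h (Fin.ext hh)
        omega
      have hadd : ((j + 1 : Fin (n + 1)) : ℕ) = (j : ℕ) + 1 := by
        rw [Fin.val_add]
        simp [Nat.mod_eq_of_lt (by omega : (j:ℕ) + 1 < n + 1)]
      have hrev : ((Fin.rev (j + 1) : Fin (n + 1)) : ℕ) = n - ((j:ℕ) + 1) := by
        rw [Fin.val_rev, hadd]; omega
      have : ((Fin.rev (j+1) : Fin (n+1)).succ : Fin (n+2)) ≠ 0 := by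
        simp [Fin.ext_iff]
      rw [Equiv.swap_apply_of_ne_of_ne this]
      · simp [Fin.ext_iff, Fin.val_rev, hrev]; omega
      · simp [Fin.ext_iff, Fin.last, hrev]; omega

lemma sign_revPerm (n : ℕ) :
    Equiv.Perm.sign (Fin.revPerm : Equiv.Perm (Fin n)) = (-1) ^ (n * (n - 1) / 2) := by
  induction n with
  | zero => simp [Subsingleton.elim (Fin.revPerm : Equiv.Perm (Fin 0)) 1]
  | succ m ih =>
    match m, ih with
    | 0, _ => simp [Subsingleton.elim (Fin.revPerm : Equiv.Perm (Fin 1)) 1]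
    | (k + 1), ih =>
      rw [rev_decomp k, Equiv.Perm.decomposeFin.symm_sign,
        if_neg (by simp [Fin.ext_iff]), _root_.map_mul, ih, sign_finRotate]
      have e1 : k + 2 - 1 = k + 1 := rfl
      have e2 : k + 1 - 1 = k := rfl
      rw [e1, e2] at *
      have h2 : (k + 2) * (k + 1) / 2 = (k + 1) * k / 2 + (k + 1) := by
        have h1 : (k+2) * (k+1) = (k+1)*k + 2*(k+1) := by ring
        omega
      rw [h2, pow_add, pow_succ]
      group

def T1 (d : ℕ) (f : ℕ → R) : Matrix (Fin d) (Fin d) R :=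
  Matrix.of fun i j => if i.1 ≤ j.1 then f (j.1 - i.1) else 0

def T2 (d : ℕ) (f : ℕ → R) : Matrix (Fin d) (Fin d) R :=
  Matrix.of fun i j => if j.1 ≤ i.1 then f (d + j.1 - i.1) else 0

def blockEquiv (d : ℕ) : Fin d ⊕ Fin d ≃ Fin (2 * d) :=
  finSumFinEquiv.trans (finCongr (two_mul d).symm)

lemma syl_eq (d : ℕ) (f g : ℕ → R) :
    fromBlocks (T1 d f) (T2 d f) (T1 d g) (T2 d g) =
      (sylvesterMatrix2d d f g).submatrix (blockEquiv d) (blockEquiv d) := by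
  have he : ∀ k : Fin d ⊕ Fin d, ((blockEquiv d k : Fin (2 * d)) : ℕ) =
      Sum.elim (fun a : Fin d => (a : ℕ)) (fun a : Fin d => d + (a : ℕ)) k := by
    rintro (a | a) <;> simp [blockEquiv] <;> omega
  ext i j
  rcases i with a | a <;> rcases j with b | b <;>
    have ha := a.2 <;> have hb := b.2 <;>
    simp only [submatrix_apply, sylvesterMatrix2d, Matrix.of_apply, he, Sum.elim_inl,
      Sum.elim_inr, fromBlocks_apply₁₁, fromBlocks_apply₁₂, fromBlocks_apply₂₁,
      fromBlocks_apply₂₂, T1, T2] <;>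
    split_ifs <;>
    first
      | rfl
      | omega
      | (congr 1; omega)

lemma T1_comm (d : ℕ) (f g : ℕ → R) : T1 d f * T1 d g = T1 d g * T1 d f := by
  ext i j
  have ha := i.2
  have hb := j.2
  simp only [mul_apply, T1, Matrix.of_apply, ite_mul, zero_mul, mul_ite, mul_zero,
    ← ite_and]
  rw [Fin.sum_univ_eq_sum_range (fun k => if k ≤ j.1 ∧ i.1 ≤ k then f (k - i.1) * g (j.1 - k) else 0),
    Fin.sum_univ_eq_sum_range (fun k => if k ≤ j.1 ∧ i.1 ≤ k then g (k - i.1) * f (j.1 - k) else 0),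
    Finset.sum_ite, Finset.sum_ite]
  congr 1
  refine Finset.sum_nbij' (fun k => i.1 + j.1 - k) (fun k => i.1 + j.1 - k) ?_ ?_ ?_ ?_ ?_ <;>
    intro k hk <;>
    simp only [Finset.mem_filter, Finset.mem_range] at hk ⊢
  · omega
  · omega
  · omega
  · omega
  · obtain ⟨hkd, hkj, hik⟩ := hk
    rw [show j.1 - (i.1 + j.1 - k) = k - i.1 by omega, show i.1 + j.1 - k - i.1 = j.1 - k by omega,
      mul_comm]

lemma bez_entry (d : ℕ) (f g : ℕ → R) (i j : Fin d) :
    bezoutMatrix d f g i j = (T1 d f * T2 d g - T1 d g * T2 d f) (Fin.rev i) j := by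
  have hi := i.2
  have hj := j.2
  obtain ⟨s, hs⟩ : ∃ s, s = i.1 + j.1 + 1 := ⟨_, rfl⟩
  have hrev : (Fin.rev i : Fin d).1 = d - 1 - i.1 := by rw [Fin.val_rev]; omega
  have hLHS : bezoutMatrix d f g i j =
      ∑ p ∈ Finset.range (d + 1),
        if p ≤ i.1 ∧ p ≤ j.1 ∧ s - p ≤ d then f p * g (s - p) - f (s - p) * g p else 0 := by
    show (∑ p ∈ Finset.range (d + 1), ∑ q ∈ Finset.range (d + 1), _) = _
    refine Finset.sum_congr rfl fun p hp => ?_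
    rw [Finset.mem_range] at hp
    rw [show (∑ q ∈ Finset.range (d + 1),
        if p < q ∧ p ≤ min i.1 j.1 ∧ p + q = i.1 + j.1 + 1 then f p * g q - f q * g p else 0)
      = ∑ q ∈ Finset.range (d + 1),
        if q = s - p then
          (if p ≤ i.1 ∧ p ≤ j.1 ∧ s - p ≤ d then f p * g (s - p) - f (s - p) * g p else 0)
        else 0 by
      refine Finset.sum_congr rfl fun q hq => ?_
      rw [Finset.mem_range] at hq
      by_cases h1 : q = s - p
      · subst h1
        rw [if_pos rfl]
        refine if_congr ?_ rfl rfl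
        omega
      · rw [if_neg h1, if_neg]
        intro hc
        exact h1 (by omega)]
    rw [Finset.sum_ite_eq' (Finset.range (d + 1)) (s - p)]
    split_ifs with h1 h2 h2 <;> first | rfl | (exfalso; rw [Finset.mem_range] at h1; omega)
  have hRHS : (T1 d f * T2 d g - T1 d g * T2 d f) (Fin.rev i) j =
      ∑ p ∈ Finset.range (d + 1),
        if p ≤ i.1 ∧ s - p ≤ d then f p * g (s - p) - f (s - p) * g p else 0 := by
    simp only [Matrix.sub_apply, mul_apply, T1, T2, Matrix.of_apply, ite_mul, zero_mul, mul_ite,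
      mul_zero, ← ite_and, ← Finset.sum_sub_distrib, hrev]
    rw [Fin.sum_univ_eq_sum_range (fun x =>
      ((if j.1 ≤ x ∧ d - 1 - i.1 ≤ x then f (x - (d - 1 - i.1)) * g (d + j.1 - x) else 0) -
        if j.1 ≤ x ∧ d - 1 - i.1 ≤ x then g (x - (d - 1 - i.1)) * f (d + j.1 - x) else 0)) d]
    rw [show (∑ x ∈ Finset.range d,
        ((if j.1 ≤ x ∧ d - 1 - i.1 ≤ x then f (x - (d - 1 - i.1)) * g (d + j.1 - x) else 0) -
          if j.1 ≤ x ∧ d - 1 - i.1 ≤ x then g (x - (d - 1 - i.1)) * f (d + j.1 - x) else 0))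
      = ∑ x ∈ Finset.range d,
        (if j.1 ≤ x ∧ d - 1 - i.1 ≤ x then
          f (x - (d - 1 - i.1)) * g (d + j.1 - x) - f (d + j.1 - x) * g (x - (d - 1 - i.1))
        else 0) from Finset.sum_congr rfl fun x _ => by split_ifs <;> ring]
    rw [Finset.sum_ite, Finset.sum_ite]
    have hz : ∀ t : Finset ℕ, (∑ _x ∈ t, (0 : R)) = 0 := fun t => Finset.sum_const_zero
    rw [hz, hz, add_zero, add_zero]
    refine Finset.sum_nbij' (fun x => x - (d - 1 - i.1)) (fun p => p + (d - 1 - i.1)) ?_ ?_ ?_ ?_ ?_ <;>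
      intro a ha <;>
      simp only [Finset.mem_filter, Finset.mem_range] at ha ⊢
    · omega
    · omega
    · omega
    · omega
    · obtain ⟨had, haj, hai⟩ := ha
      rw [show d + j.1 - a = s - (a - (d - 1 - i.1)) by omega]
  rw [hLHS, hRHS]
  have hsplit : (∑ p ∈ Finset.range (d + 1),
        if p ≤ i.1 ∧ s - p ≤ d then f p * g (s - p) - f (s - p) * g p else 0)
      - (∑ p ∈ Finset.range (d + 1),
        if p ≤ i.1 ∧ p ≤ j.1 ∧ s - p ≤ d then f p * g (s - p) - f (s - p) * g p else 0)
      = ∑ p ∈ Finset.range (d + 1),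
        if j.1 < p ∧ p ≤ i.1 ∧ s - p ≤ d then f p * g (s - p) - f (s - p) * g p else 0 := by
    rw [← Finset.sum_sub_distrib]
    refine Finset.sum_congr rfl fun p _ => ?_
    by_cases h1 : p ≤ i.1 ∧ p ≤ j.1 ∧ s - p ≤ d
    · rw [if_pos (⟨h1.1, h1.2.2⟩ : p ≤ i.1 ∧ s - p ≤ d), if_pos h1, if_neg (by omega), sub_self]
    · by_cases h2 : p ≤ i.1 ∧ s - p ≤ d
      · rw [if_pos h2, if_neg h1, if_pos (by omega), sub_zero]
      · rw [if_neg h2, if_neg h1, if_neg (by omega), sub_zero]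
  have hzero : (∑ p ∈ Finset.range (d + 1),
      if j.1 < p ∧ p ≤ i.1 ∧ s - p ≤ d then f p * g (s - p) - f (s - p) * g p else 0) = 0 := by
    refine Finset.sum_involution
      (fun p _ => if j.1 < p ∧ p ≤ i.1 ∧ s - p ≤ d then s - p else p) ?_ ?_ ?_ ?_
    · intro p hp
      rw [Finset.mem_range] at hp
      by_cases hc : j.1 < p ∧ p ≤ i.1 ∧ s - p ≤ d
      · rw [if_pos hc, if_pos hc, if_pos (by omega : j.1 < s - p ∧ s - p ≤ i.1 ∧ s - (s - p) ≤ d),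
          show s - (s - p) = p by omega]
        ring
      · rw [if_neg hc, if_neg hc, if_neg hc, zero_add]
    · intro p hp hne
      by_cases hc : j.1 < p ∧ p ≤ i.1 ∧ s - p ≤ d
      · rw [if_pos hc]
        intro heq
        apply hne
        rw [if_pos hc, heq, sub_self]
      · exfalso
        exact hne (if_neg hc)
    · intro p hp
      rw [Finset.mem_range] at hp ⊢
      split_ifs <;> omega
    · intro p hp
      rw [Finset.mem_range] at hp
      by_cases hc : j.1 < p ∧ p ≤ i.1 ∧ s - p ≤ d
      · rw [if_pos hc]
        rw [if_pos (by omega : j.1 < s - p ∧ s - p ≤ i.1 ∧ s - (s - p) ≤ d)]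
        omega
      · rw [if_neg hc, if_neg hc]
  exact (sub_eq_zero.mp (hsplit.trans hzero)).symm

lemma det_T1 (d : ℕ) (f : ℕ → R) : (T1 d f).det = f 0 ^ d := by
  rw [Matrix.det_of_upperTriangular (by
    intro i j h
    simp only [T1, Matrix.of_apply]
    rw [if_neg]
    exact fun hc => absurd hc (not_le.mpr h))]
  simp [T1]

lemma key_generic {D : Type*} [CommRing D] [IsDomain D] (d : ℕ) (f g : ℕ → D)
    (hf : f 0 ≠ 0) :
    (bezoutMatrix d f g).det =
      (-1 : D) ^ (d * (d - 1) / 2) * (sylvesterMatrix2d d f g).det := by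
  set M := T1 d f * T2 d g - T1 d g * T2 d f with hM
  have hdetS : (sylvesterMatrix2d d f g).det =
      (fromBlocks (T1 d f) (T2 d f) (T1 d g) (T2 d g)).det := by
    rw [syl_eq, Matrix.det_submatrix_equiv_self]
  have hL : (fromBlocks (1 : Matrix (Fin d) (Fin d) D) 0 (-(T1 d g)) (T1 d f)) *
      (fromBlocks (T1 d f) (T2 d f) (T1 d g) (T2 d g)) =
      fromBlocks (T1 d f) (T2 d f) 0 M := by
    rw [fromBlocks_multiply, Matrix.one_mul, Matrix.one_mul, Matrix.zero_mul, Matrix.zero_mul,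
      add_zero, add_zero, Matrix.neg_mul, Matrix.neg_mul, T1_comm, neg_add_cancel,
      neg_add_eq_sub]
  have hdetM : (fromBlocks (T1 d f) (T2 d f) (T1 d g) (T2 d g)).det = M.det := by
    have h1 := congrArg Matrix.det hL
    rw [Matrix.det_mul, Matrix.det_fromBlocks_zero₁₂, Matrix.det_fromBlocks_zero₂₁,
      Matrix.det_one, one_mul] at h1
    exact mul_left_cancel₀ (by rw [det_T1]; exact pow_ne_zero _ hf) h1
  have hB : bezoutMatrix d f g = M.submatrix (Fin.revPerm : Equiv.Perm (Fin d)) id := by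
    ext i j
    exact bez_entry d f g i j
  rw [hB, Matrix.det_permute, sign_revPerm, hdetS, hdetM]
  push_cast
  ring

lemma bez_map {S : Type*} [CommRing S] (φ : R →+* S) (d : ℕ) (f g : ℕ → R) :
    (bezoutMatrix d f g).map φ = bezoutMatrix d (φ ∘ f) (φ ∘ g) := by
  ext i j
  simp only [bezoutMatrix, Matrix.map_apply, Matrix.of_apply, map_sum, apply_ite φ,
    map_sub, _root_.map_mul, map_zero, Function.comp_apply]

lemma syl_map {S : Type*} [CommRing S] (φ : R →+* S) (d : ℕ) (f g : ℕ → R) :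
    (sylvesterMatrix2d d f g).map φ = sylvesterMatrix2d d (φ ∘ f) (φ ∘ g) := by
  ext i j
  simp only [sylvesterMatrix2d, Matrix.map_apply, Matrix.of_apply, apply_ite φ,
    map_zero, Function.comp_apply]

end BezAux

/-- **Bézout versus Sylvester:** over any commutative ring,
`det (Bézout matrix) = (−1)^{d(d−1)/2} · det (Sylvester matrix)`. -/
theorem bezout_det_eq_sign_mul_sylvester_det
    (d : ℕ) (hd : 1 ≤ d) {R : Type*} [CommRing R] (f g : ℕ → R) :
    (bezoutMatrix d f g).det =
      (-1 : R) ^ (d * (d - 1) / 2) * (sylvesterMatrix2d d f g).det := by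
  classical
  set D := MvPolynomial (ℕ ⊕ ℕ) ℤ with hD
  set F : ℕ → D := fun n => MvPolynomial.X (Sum.inl n) with hF
  set G : ℕ → D := fun n => MvPolynomial.X (Sum.inr n) with hG
  have hkey := BezAux.key_generic d F G (MvPolynomial.X_ne_zero _)
  set φ : D →+* R := MvPolynomial.eval₂Hom (Int.castRingHom R) (Sum.elim f g) with hφ
  have hf : φ ∘ F = f := by funext n; rw [hφ, hF]; exact (MvPolynomial.eval₂Hom_X' _ _ _)
  have hg : φ ∘ G = g := by funext n; rw [hφ, hG]; exact (MvPolynomial.eval₂Hom_X' _ _ _)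
  have h1 : (bezoutMatrix d f g).det = φ (bezoutMatrix d F G).det := by
    rw [RingHom.map_det, RingHom.mapMatrix_apply, BezAux.bez_map, hf, hg]
  have h2 : (sylvesterMatrix2d d f g).det = φ (sylvesterMatrix2d d F G).det := by
    rw [RingHom.map_det, RingHom.mapMatrix_apply, BezAux.syl_map, hf, hg]
  rw [h1, h2, hkey, _root_.map_mul]
  congr 1
  rw [map_pow, map_neg, map_one]
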